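/- Let G be a finite group with norm element N, and let (N,2) ⊂ ℤG be the left ideal generated by N and 2, and (I,2) = ker(ℤG → ℤ/2). Then there is an isomorphism of ℤG-modules (N,2) ≅ (I,2)* = Hom_ℤ((I,2), ℤ) sending 2 to the inclusion (I,2) ↪ ℤG and N to the map λ ↦ (1/2)ε(λ)·N, under the identification (I,2)* ≅ Hom_{ℤG}((I,2), ℤG). -/

import Mathlib

open TensorProduct

section SubQuot
variable {G : Type*} [Group G] {V : Type*} [AddCommGroup V] [Module ℤ V]

/-- The restriction of a representation to an invariant submodule. -/
def subRep (ρ : Representation ℤ G V) (p : Submodule ℤ V)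
    (hp : ∀ g : G, ∀ x ∈ p, ρ g x ∈ p) : Representation ℤ G p where
  toFun g := (ρ g).restrict (hp g)
  map_one' := by
    ext x
    simp [LinearMap.restrict_apply]
  map_mul' g h := by
    ext x
    simp [LinearMap.restrict_apply, map_mul]

/-- The representation induced on the quotient by an invariant submodule. -/
noncomputable def quotRep (ρ : Representation ℤ G V) (p : Submodule ℤ V)
    (hp : ∀ g : G, ∀ x ∈ p, ρ g x ∈ p) : Representation ℤ G (V ⧸ p) where
  toFun g := Submodule.mapQ p p (ρ g) (hp g)
  map_one' := by
    apply LinearMap.ext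
    intro x
    obtain ⟨v, rfl⟩ := Submodule.Quotient.mk_surjective p x
    simp [Submodule.mapQ_apply]
  map_mul' g h := by
    apply LinearMap.ext
    intro x
    obtain ⟨v, rfl⟩ := Submodule.Quotient.mk_surjective p x
    simp [Submodule.mapQ_apply, map_mul]

end SubQuot

section GroupRing
variable (G : Type*) [Group G]

/-- The left regular representation of `G` on the group ring `ℤG`. -/
noncomputable def regRep : Representation ℤ G (MonoidAlgebra ℤ G) where
  toFun g := LinearMap.mulLeft ℤ (MonoidAlgebra.of ℤ G g)
  map_one' := by
    apply LinearMap.ext; intro x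
    simp [MonoidAlgebra.of_apply, ← MonoidAlgebra.one_def]
  map_mul' g h := by
    apply LinearMap.ext; intro x
    simp only [MonoidAlgebra.of_apply, LinearMap.mulLeft_apply, Module.End.mul_apply]
    rw [← mul_assoc, MonoidAlgebra.single_mul_single, mul_one]

/-- The augmentation map `ε : ℤG → ℤ`. -/
noncomputable def aug : MonoidAlgebra ℤ G →ₐ[ℤ] ℤ := MonoidAlgebra.lift ℤ ℤ G 1

/-- The augmentation ideal `I = ker(ε : ℤG → ℤ)`. -/
noncomputable def augI : Ideal (MonoidAlgebra ℤ G) := RingHom.ker (aug G).toRingHom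

/-- The mod 2 augmentation map `ℤG → ℤ/2`. -/
noncomputable def aug2 : MonoidAlgebra ℤ G →+* ZMod 2 :=
  (Int.castRingHom (ZMod 2)).comp (aug G).toRingHom

/-- The ideal `(I, 2) = ker(ℤG → ℤ/2)` generated by the augmentation ideal and `2`. -/
noncomputable def I2 : Ideal (MonoidAlgebra ℤ G) := RingHom.ker (aug2 G)

/-- The norm element `N = ∑_{g ∈ G} g ∈ ℤG`. -/
noncomputable def Nelt [Fintype G] : MonoidAlgebra ℤ G := ∑ g : G, MonoidAlgebra.of ℤ G g

/-- The (left) ideal of `ℤG` generated by the norm element `N`; the quotient by it is `ℤG/N`. -/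
noncomputable def NIdeal [Fintype G] : Ideal (MonoidAlgebra ℤ G) := Ideal.span {Nelt G}

/-- The left ideal `(N, 2)` of `ℤG` generated by the norm element `N` and `2`. -/
noncomputable def N2 [Fintype G] : Ideal (MonoidAlgebra ℤ G) := Ideal.span {Nelt G, 2}

lemma aug_single (g : G) : aug G (MonoidAlgebra.single g 1) = 1 := by
  simp [aug, MonoidAlgebra.lift_single]

lemma of_sub_one_mem_augI (g : G) :
    MonoidAlgebra.of ℤ G g - 1 ∈ (augI G).restrictScalars ℤ := by
  simp [augI, RingHom.mem_ker, map_sub, aug_single]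

lemma of_sub_one_mem_I2 (g : G) :
    MonoidAlgebra.of ℤ G g - 1 ∈ (I2 G).restrictScalars ℤ := by
  simp [I2, aug2, RingHom.mem_ker, map_sub, aug_single]

lemma two_mem_I2 : (2 : MonoidAlgebra ℤ G) ∈ (I2 G).restrictScalars ℤ := by
  have : (aug2 G) 2 = 2 := by simp [map_ofNat]
  simp [I2, RingHom.mem_ker, this]
  decide

lemma N_mem_I2 [Fintype G] (h : Even (Fintype.card G)) :
    Nelt G ∈ (I2 G).restrictScalars ℤ := by
  have : (aug2 G) (Nelt G) = (Fintype.card G : ZMod 2) := by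
    simp [Nelt, map_sum, aug2, aug_single]
  simp only [Submodule.restrictScalars_mem, I2, RingHom.mem_ker, this]
  rw [ZMod.natCast_eq_zero_iff]
  exact h.two_dvd

lemma N_mem_N2 [Fintype G] : Nelt G ∈ (N2 G).restrictScalars ℤ :=
  Ideal.subset_span (by simp)

lemma two_mem_N2 [Fintype G] : (2 : MonoidAlgebra ℤ G) ∈ (N2 G).restrictScalars ℤ :=
  Ideal.subset_span (by simp)

lemma ideal_invariant (J : Ideal (MonoidAlgebra ℤ G)) :
    ∀ g : G, ∀ x ∈ J.restrictScalars ℤ, (regRep G) g x ∈ J.restrictScalars ℤ := by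
  intro g x hx
  exact J.mul_mem_left _ hx

/-- A (left) ideal of `ℤG`, regarded as a representation of `G`. -/
noncomputable def idealRep (J : Ideal (MonoidAlgebra ℤ G)) :
    Representation ℤ G ↥(J.restrictScalars ℤ) :=
  subRep (regRep G) (J.restrictScalars ℤ) (ideal_invariant G J)

/-- The quotient `ℤG/N` of `ℤG` by the ideal generated by the norm element, as a
representation of `G`. -/
noncomputable def quotNRep [Fintype G] :
    Representation ℤ G (MonoidAlgebra ℤ G ⧸ (NIdeal G).restrictScalars ℤ) :=
  quotRep (regRep G) ((NIdeal G).restrictScalars ℤ) (ideal_invariant G (NIdeal G))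

/-- `2` as an element of `(I,2)`. -/
noncomputable def twoI2 : ↥((I2 G).restrictScalars ℤ) := ⟨2, two_mem_I2 G⟩

/-- `g - 1` as an element of `(I,2)`. -/
noncomputable def gm1 (g : G) : ↥((I2 G).restrictScalars ℤ) :=
  ⟨MonoidAlgebra.of ℤ G g - 1, of_sub_one_mem_I2 G g⟩

/-- `g - 1` as an element of the augmentation ideal `I`. -/
noncomputable def gm1I (g : G) : ↥((augI G).restrictScalars ℤ) :=
  ⟨MonoidAlgebra.of ℤ G g - 1, of_sub_one_mem_augI G g⟩

/-- The norm element as an element of `(I,2)` (for `G` of even order). -/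
noncomputable def NeltI2 [Fintype G] (h : Even (Fintype.card G)) :
    ↥((I2 G).restrictScalars ℤ) := ⟨Nelt G, N_mem_I2 G h⟩

/-- The norm element as an element of `(N,2)`. -/
noncomputable def NeltN2 [Fintype G] : ↥((N2 G).restrictScalars ℤ) := ⟨Nelt G, N_mem_N2 G⟩

end GroupRing

/-!
The coefficient pairing `⟨μ, λ⟩ = ∑_g μ(g) λ(g)` on `ℤG` is invariant under left translation.
An element of `(N,2)` has the form `cN + 2d`, and `⟨cN + 2d, λ⟩ = ε(c) ε(λ) + 2 ⟨d, λ⟩` is even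
for `λ ∈ (I,2)`, so `μ ↦ ⟨μ, -⟩ / 2` maps `(N,2)` equivariantly into `(I,2)*`. Its inverse is
`φ ↦ φ(2) N + 2 ∑_g φ(g - 1) g`: since `(I,2)` is spanned over `ℤ` by `2` and the `g - 1`, it
suffices to compare values there, where `⟨μ, 2⟩ = 2 μ(1)` and `⟨μ, g - 1⟩ = μ(g) - μ(1)`.
-/

open MonoidAlgebra

section Pairing
variable {R : Type*} [CommSemiring R] {G : Type*} [Fintype G]

noncomputable def coeffPairing : MonoidAlgebra R G →ₗ[R] MonoidAlgebra R G →ₗ[R] R :=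
  LinearMap.mk₂ R (fun μ l => ∑ g, μ.coeff g * l.coeff g)
    (fun _ _ _ => by simp [add_mul, Finset.sum_add_distrib])
    (fun _ _ _ => by simp [mul_assoc, Finset.mul_sum])
    (fun _ _ _ => by simp [mul_add, Finset.sum_add_distrib])
    (fun _ _ _ => by simp [mul_left_comm, Finset.mul_sum])

lemma coeffPairing_apply (μ l : MonoidAlgebra R G) :
    coeffPairing μ l = ∑ g, μ.coeff g * l.coeff g := rfl

lemma coeffPairing_single_left (g : G) (r : R) (l : MonoidAlgebra R G) :
    coeffPairing (single g r) l = r * l.coeff g := by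
  classical
  simp [coeffPairing_apply, Finsupp.single_apply]

lemma coeffPairing_single_right (μ : MonoidAlgebra R G) (g : G) (r : R) :
    coeffPairing μ (single g r) = μ.coeff g * r := by
  classical
  simp [coeffPairing_apply, Finsupp.single_apply]

lemma coeffPairing_single_mul [Group G] (g : G) (μ l : MonoidAlgebra R G) :
    coeffPairing (single g 1 * μ) l = coeffPairing μ (single g⁻¹ 1 * l) :=
  Fintype.sum_equiv (Equiv.mulLeft g⁻¹) _ _ fun h => by simp

lemma coeffPairing_two_left [Monoid G] (l : MonoidAlgebra R G) :
    coeffPairing 2 l = 2 * l.coeff 1 :=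
  coeffPairing_single_left 1 2 l

lemma coeffPairing_two_right [Monoid G] (μ : MonoidAlgebra R G) :
    coeffPairing μ 2 = μ.coeff 1 * 2 :=
  coeffPairing_single_right μ 1 2

end Pairing

section Duality
variable {G : Type*} [Group G]

lemma two_dvd_aug_of_mem_I2 {l : MonoidAlgebra ℤ G} (hl : l ∈ I2 G) : (2 : ℤ) ∣ aug G l := by
  simpa [I2, aug2, RingHom.mem_ker, ZMod.intCast_zmod_eq_zero_iff_dvd] using hl

lemma gm1_one : gm1 G 1 = 0 :=
  Subtype.ext (by simp [gm1, one_def])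

variable [Fintype G]

lemma aug_eq_sum_coeff (l : MonoidAlgebra ℤ G) : aug G l = ∑ g, l.coeff g := by
  rw [aug, MonoidAlgebra.lift_apply, Finsupp.sum_fintype] <;> simp

lemma coeff_Nelt (g : G) : (Nelt G).coeff g = 1 := by
  classical
  simp [Nelt, Finsupp.single_apply]

lemma coeffPairing_Nelt_left (l : MonoidAlgebra ℤ G) : coeffPairing (Nelt G) l = aug G l := by
  simp [coeffPairing_apply, aug_eq_sum_coeff, coeff_Nelt]

lemma of_mul_Nelt (g : G) : of ℤ G g * Nelt G = Nelt G := by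
  simp only [Nelt, Finset.mul_sum, ← map_mul]
  exact Fintype.sum_equiv (Equiv.mulLeft g) _ _ fun _ => rfl

lemma mul_Nelt (c : MonoidAlgebra ℤ G) : c * Nelt G = aug G c • Nelt G := by
  induction c using MonoidAlgebra.induction_linear with
  | zero => simp
  | add a b ha hb => rw [add_mul, ha, hb, map_add, add_smul]
  | single g r =>
    rw [show single g r = r • of ℤ G g by simp, smul_mul_assoc, of_mul_Nelt, map_zsmul,
      of_apply, aug_single, smul_eq_mul, mul_one]

lemma two_dvd_coeffPairing {μ l : MonoidAlgebra ℤ G} (hμ : μ ∈ N2 G) (hl : l ∈ I2 G) :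
    (2 : ℤ) ∣ coeffPairing μ l := by
  obtain ⟨c, d, rfl⟩ := Submodule.mem_span_pair.mp hμ
  have hd : d * 2 = (2 : ℤ) • d := by rw [mul_two, two_smul]
  have key : coeffPairing (c * Nelt G + d * 2) l = aug G c * aug G l + 2 * coeffPairing d l := by
    rw [mul_Nelt, hd, map_add, map_smul, map_smul, LinearMap.add_apply, LinearMap.smul_apply,
      LinearMap.smul_apply, coeffPairing_Nelt_left, smul_eq_mul, smul_eq_mul]
  rw [smul_eq_mul, smul_eq_mul, key]
  exact dvd_add ((two_dvd_aug_of_mem_I2 hl).mul_left _) (dvd_mul_right _ _)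

lemma coeffPairing_gm1_right (μ : MonoidAlgebra ℤ G) (g : G) :
    coeffPairing μ (gm1 G g) = μ.coeff g - μ.coeff 1 := by
  rw [gm1, Subtype.coe_mk, map_sub, of_apply, one_def, coeffPairing_single_right,
    coeffPairing_single_right, mul_one, mul_one]

noncomputable def halfPairing :
    ↥((N2 G).restrictScalars ℤ) →ₗ[ℤ] Module.Dual ℤ ↥((I2 G).restrictScalars ℤ) :=
  LinearMap.mk₂ ℤ (fun μ l => coeffPairing (μ : MonoidAlgebra ℤ G) l / 2)
    (fun μ ν l => by simp [Int.add_ediv_of_dvd_left (two_dvd_coeffPairing μ.2 l.2)])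
    (fun z μ l => by
      simp only [Submodule.coe_smul, map_smul, LinearMap.smul_apply, smul_eq_mul,
        Int.mul_ediv_assoc z (two_dvd_coeffPairing μ.2 l.2)])
    (fun μ l l' => by simp [Int.add_ediv_of_dvd_left (two_dvd_coeffPairing μ.2 l.2)])
    (fun z μ l => by
      simp only [Submodule.coe_smul, map_smul, smul_eq_mul,
        Int.mul_ediv_assoc z (two_dvd_coeffPairing μ.2 l.2)])

lemma two_mul_halfPairing_apply (μ : ↥((N2 G).restrictScalars ℤ))
    (l : ↥((I2 G).restrictScalars ℤ)) :
    2 * halfPairing μ l = coeffPairing (μ : MonoidAlgebra ℤ G) l :=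
  Int.mul_ediv_cancel' (two_dvd_coeffPairing μ.2 l.2)

lemma halfPairing_idealRep (g : G) (μ : ↥((N2 G).restrictScalars ℤ)) :
    halfPairing (idealRep G (N2 G) g μ) = (idealRep G (I2 G)).dual g (halfPairing μ) := by
  ext l
  exact congrArg (· / 2) (coeffPairing_single_mul g (μ : MonoidAlgebra ℤ G) l)

lemma halfPairing_apply_twoI2 (μ : ↥((N2 G).restrictScalars ℤ)) :
    halfPairing μ (twoI2 G) = (μ : MonoidAlgebra ℤ G).coeff 1 := by
  have h := two_mul_halfPairing_apply μ (twoI2 G)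
  rw [show (twoI2 G : MonoidAlgebra ℤ G) = 2 from rfl, coeffPairing_two_right] at h
  linarith

lemma two_mul_halfPairing_apply_gm1 (μ : ↥((N2 G).restrictScalars ℤ)) (g : G) :
    2 * halfPairing μ (gm1 G g) =
      (μ : MonoidAlgebra ℤ G).coeff g - (μ : MonoidAlgebra ℤ G).coeff 1 :=
  (two_mul_halfPairing_apply μ (gm1 G g)).trans (coeffPairing_gm1_right _ g)

lemma halfPairing_two_apply (l : ↥((I2 G).restrictScalars ℤ)) :
    halfPairing ⟨2, two_mem_N2 G⟩ l = (l : MonoidAlgebra ℤ G).coeff 1 := by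
  have h := two_mul_halfPairing_apply ⟨2, two_mem_N2 G⟩ l
  rw [Subtype.coe_mk, coeffPairing_two_left] at h
  linarith

lemma two_mul_halfPairing_NeltN2_apply (l : ↥((I2 G).restrictScalars ℤ)) :
    2 * halfPairing (NeltN2 G) l = aug G l :=
  (two_mul_halfPairing_apply _ l).trans (coeffPairing_Nelt_left (l : MonoidAlgebra ℤ G))

noncomputable def ofDualI2 (φ : Module.Dual ℤ ↥((I2 G).restrictScalars ℤ)) :
    MonoidAlgebra ℤ G :=
  φ (twoI2 G) • Nelt G + (∑ g, φ (gm1 G g) • of ℤ G g) * 2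

lemma ofDualI2_mem (φ : Module.Dual ℤ ↥((I2 G).restrictScalars ℤ)) :
    ofDualI2 φ ∈ (N2 G).restrictScalars ℤ :=
  add_mem (Submodule.smul_mem _ _ (N_mem_N2 G)) (Ideal.mul_mem_left _ _ (two_mem_N2 G))

lemma coeff_ofDualI2 (φ : Module.Dual ℤ ↥((I2 G).restrictScalars ℤ)) (x : G) :
    (ofDualI2 φ).coeff x = φ (twoI2 G) + φ (gm1 G x) * 2 := by
  classical
  rw [ofDualI2, show (2 : MonoidAlgebra ℤ G) = single 1 2 from rfl, coeff_add,
    Finsupp.add_apply, coeff_smul, Finsupp.smul_apply, coeff_Nelt, coeff_mul_single_apply]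
  simp [Finsupp.single_apply]

lemma span_insert_twoI2_range_gm1 :
    Submodule.span ℤ (insert (twoI2 G) (Set.range (gm1 G))) = ⊤ := by
  refine Submodule.eq_top_iff'.mpr fun l => ?_
  have hsum : ∑ g, (l : MonoidAlgebra ℤ G).coeff g • of ℤ G g = l := by
    ext x
    simp
  have hl : l = (aug G l / 2) • twoI2 G + ∑ g, (l : MonoidAlgebra ℤ G).coeff g • gm1 G g := by
    ext1
    simp only [Submodule.coe_add, Submodule.coe_smul, Submodule.coe_sum, twoI2, gm1, smul_sub,
      Finset.sum_sub_distrib, hsum, ← Finset.sum_smul, ← aug_eq_sum_coeff]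
    rw [← (two_smul ℤ (1 : MonoidAlgebra ℤ G)).trans one_add_one_eq_two, smul_smul,
      Int.ediv_mul_cancel (two_dvd_aug_of_mem_I2 l.2)]
    abel
  rw [hl]
  exact add_mem (Submodule.smul_mem _ _ (Submodule.subset_span (Set.mem_insert _ _)))
    (Submodule.sum_mem _ fun g _ =>
      Submodule.smul_mem _ _ (Submodule.subset_span (Set.mem_insert_of_mem _ ⟨g, rfl⟩)))

lemma ofDualI2_halfPairing (μ : ↥((N2 G).restrictScalars ℤ)) :
    ofDualI2 (halfPairing μ) = μ := by
  ext x
  rw [coeff_ofDualI2, halfPairing_apply_twoI2]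
  linarith [two_mul_halfPairing_apply_gm1 μ x]

lemma halfPairing_ofDualI2 (φ : Module.Dual ℤ ↥((I2 G).restrictScalars ℤ)) :
    halfPairing ⟨ofDualI2 φ, ofDualI2_mem φ⟩ = φ := by
  refine LinearMap.ext_on span_insert_twoI2_range_gm1 ?_
  rintro _ (rfl | ⟨g, rfl⟩)
  · rw [halfPairing_apply_twoI2, Subtype.coe_mk, coeff_ofDualI2, gm1_one, map_zero, zero_mul,
      add_zero]
  · have h := two_mul_halfPairing_apply_gm1 ⟨ofDualI2 φ, ofDualI2_mem φ⟩ g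
    rw [Subtype.coe_mk, coeff_ofDualI2, coeff_ofDualI2, gm1_one, map_zero] at h
    linarith

noncomputable def n2EquivDualI2 :
    ↥((N2 G).restrictScalars ℤ) ≃ₗ[ℤ] Module.Dual ℤ ↥((I2 G).restrictScalars ℤ) :=
  { halfPairing with
    invFun := fun φ => ⟨ofDualI2 φ, ofDualI2_mem φ⟩
    left_inv := fun μ => Subtype.ext (ofDualI2_halfPairing μ)
    right_inv := halfPairing_ofDualI2 }

end Duality

/-- For a finite group `G`, there is an isomorphism of `ℤG`-modules
`(N,2) ≅ (I,2)* = Hom_ℤ((I,2), ℤ)` sending `2` to the inclusion `(I,2) ↪ ℤG` and `N` to the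
map `λ ↦ (1/2)ε(λ)·N`, under the identification `(I,2)* ≅ Hom_{ℤG}((I,2), ℤG)` (under which a
`ℤG`-linear map `F` corresponds to the `ℤ`-linear functional `λ ↦ (F λ)(1)`, the coefficient of
the identity).  Thus the inclusion corresponds to `λ ↦ λ(1)` and `λ ↦ (1/2)ε(λ)·N` corresponds
to `λ ↦ (1/2)ε(λ)`. -/
theorem stmt11 {G : Type*} [Group G] [Fintype G] :
    ∃ e : ↥((N2 G).restrictScalars ℤ) ≃ₗ[ℤ] Module.Dual ℤ ↥((I2 G).restrictScalars ℤ),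
      (∀ (g : G) (v : ↥((N2 G).restrictScalars ℤ)),
        e ((idealRep G (N2 G)) g v) = ((idealRep G (I2 G)).dual g) (e v)) ∧
      (∀ lam : ↥((I2 G).restrictScalars ℤ),
        e ⟨2, two_mem_N2 G⟩ lam = (lam : MonoidAlgebra ℤ G).coeff 1) ∧
      (∀ lam : ↥((I2 G).restrictScalars ℤ),
        2 * e (NeltN2 G) lam = aug G (lam : MonoidAlgebra ℤ G)) :=
  ⟨n2EquivDualI2, halfPairing_idealRep, halfPairing_two_apply, two_mul_halfPairing_NeltN2_apply⟩
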